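/- arXiv:1911.01768 — 2 statements merged into one kernel-verified Lean document; each statement's English description precedes it below -/
import Mathlib

section
/- For all real numbers y, z ≥ 0 and real p with p ≥ 1/2, the inequality |y^p - z^p - p·z^(p-1)·(y-z)| ≤ (p|p-1|/2)·(y^(p-2) + z^(p-2))·(y-z)² holds, where y, z > 0 when negative powers appear. -/
/-!
By Taylor's theorem with the Lagrange remainder, `y ^ p - z ^ p - p * z ^ (p - 1) * (y - z)` equals
`p * (p - 1) * c ^ (p - 2) * (y - z) ^ 2 / 2` for some `c` between `z` and `y`. Every power function
is monotone or antitone on `(0, ∞)`, hence quasiconvex there, so `c ^ (p - 2)` is at most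
`max (y ^ (p - 2)) (z ^ (p - 2))`; finally `p ≥ 0` turns `|p * (p - 1)|` into `p * |p - 1|`.
-/

open Set

theorem exists_sub_sub_deriv_mul_eq_iteratedDeriv_two {f : ℝ → ℝ} {x₀ x : ℝ} (hx : x₀ ≠ x)
    (hf : ∀ t ∈ uIcc x₀ x, ContDiffAt ℝ 2 f t) :
    ∃ c ∈ uIoo x₀ x,
      f x - f x₀ - deriv f x₀ * (x - x₀) = iteratedDeriv 2 f c * (x - x₀) ^ 2 / 2 := by
  obtain ⟨c, hc, H⟩ := taylor_mean_remainder_lagrange_iteratedDeriv (n := 1) hx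
    fun t ht => (hf t ht).contDiffWithinAt
  have hderiv : derivWithin f (uIcc x₀ x) x₀ = deriv f x₀ :=
    ((hf x₀ left_mem_uIcc).differentiableAt (by norm_num)).derivWithin
      (uniqueDiffOn_uIcc hx x₀ left_mem_uIcc)
  refine ⟨c, hc, ?_⟩
  norm_num [taylorWithinEval_succ, taylor_within_zero_eval, hderiv] at H
  linear_combination H

theorem iteratedDeriv_two_rpow_const (p x : ℝ) :
    iteratedDeriv 2 (fun x : ℝ => x ^ p) x = p * (p - 1) * x ^ (p - 2) := by
  rw [iteratedDeriv_eq_iterate, Real.iter_deriv_rpow_const]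
  simp [descPochhammer_succ_right]

theorem QuasiconvexOn.le_max_of_mem_uIcc {s : Set ℝ} {f : ℝ → ℝ} (hf : QuasiconvexOn ℝ s f)
    {a b c : ℝ} (ha : a ∈ s) (hb : b ∈ s) (hc : c ∈ uIcc a b) : f c ≤ max (f a) (f b) := by
  have hsub := (hf (max (f a) (f b))).segment_subset ⟨ha, le_max_left ..⟩ ⟨hb, le_max_right ..⟩
  rw [segment_eq_uIcc] at hsub
  exact (hsub hc).2

theorem quasiconvexOn_rpow_const (q : ℝ) : QuasiconvexOn ℝ (Ioi 0) fun x : ℝ => x ^ q := by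
  rcases le_total 0 q with hq | hq
  · exact ((Real.monotoneOn_rpow_Ici_of_exponent_nonneg hq).mono Ioi_subset_Ici_self).quasiconvexOn
      (convex_Ioi 0)
  · exact (Real.antitoneOn_rpow_Ioi_of_exponent_nonpos hq).quasiconvexOn (convex_Ioi 0)

theorem exists_rpow_sub_rpow_sub_mul_eq {y z : ℝ} (hy : 0 < y) (hz : 0 < z) (hyz : z ≠ y) (p : ℝ) :
    ∃ c ∈ uIoo z y,
      y ^ p - z ^ p - p * z ^ (p - 1) * (y - z) = p * (p - 1) * c ^ (p - 2) * (y - z) ^ 2 / 2 := by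
  obtain ⟨c, hc, H⟩ := exists_sub_sub_deriv_mul_eq_iteratedDeriv_two hyz fun t ht =>
    Real.contDiffAt_rpow_const_of_ne (ordConnected_Ioi.uIcc_subset hz hy ht).ne'
  rw [Real.deriv_rpow_const, iteratedDeriv_two_rpow_const] at H
  exact ⟨c, hc, H⟩

theorem taylor_second_order_rpow (y z p : ℝ) (hy : 0 < y) (hz : 0 < z) (hp : 1 / 2 ≤ p) :
    |y ^ p - z ^ p - p * z ^ (p - 1) * (y - z)| ≤
      (p * |p - 1| / 2) * (y ^ (p - 2) + z ^ (p - 2)) * (y - z) ^ 2 := by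
  rcases eq_or_ne z y with rfl | hyz
  · simp
  obtain ⟨c, hc, H⟩ := exists_rpow_sub_rpow_sub_mul_eq hy hz hyz p
  replace hc := uIoo_subset_uIcc_self hc
  have hc_le : c ^ (p - 2) ≤ y ^ (p - 2) + z ^ (p - 2) :=
    calc c ^ (p - 2) ≤ max (z ^ (p - 2)) (y ^ (p - 2)) :=
          (quasiconvexOn_rpow_const _).le_max_of_mem_uIcc hz hy hc
      _ ≤ z ^ (p - 2) + y ^ (p - 2) := max_le_add_of_nonneg (by positivity) (by positivity)
      _ = y ^ (p - 2) + z ^ (p - 2) := add_comm _ _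
  have hc_pos : 0 < c := ordConnected_Ioi.uIcc_subset hz hy hc
  rw [H, abs_div, abs_mul, abs_mul, abs_mul, abs_of_nonneg (by linarith : 0 ≤ p),
    abs_of_pos (Real.rpow_pos_of_pos hc_pos _), abs_of_nonneg (sq_nonneg (y - z)), abs_two]
  calc p * |p - 1| * c ^ (p - 2) * (y - z) ^ 2 / 2
      ≤ p * |p - 1| * (y ^ (p - 2) + z ^ (p - 2)) * (y - z) ^ 2 / 2 := by gcongr
    _ = _ := by ring
end

section
/- Let θ ≥ 1 and let ν be a Lévy measure on ℝ^d \ {0} (i.e. ∫ (1 ∧ |x|²) ν(dx) < ∞). Let ν_Z(A) = ∫_{(0,∞)} ∫_{ℝ^d} 1_A(x) (2πs)^{-d/2} e^{-|x|²/(2s)} dx ν_S(ds) be the Lévy measure of a subordinate Brownian motion with subordinator Lévy measure ν_S. Then ∫_{|x| ≥ 1} |x|^θ ν_Z(dx) < ∞ if and only if ∫_{(1,∞)} s^{θ/2} ν_S(ds) < ∞. -/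
/-!
Write `p_s` for the heat kernel and `F(s) = ∫_{‖x‖ ≥ 1} ‖x‖^θ p_s(x) dx`, so that the left-hand
side is `∫_{(0,∞)} F dν_S`. Since `p_s(x) = 2^{d/2} e^{-‖x‖²/(4s)} p_{2s}(x)` and `p_{2s}` has mass
one, `F(s)` is at most `2^{d/2} sup_{‖x‖ ≥ 1} ‖x‖^θ e^{-‖x‖²/(4s)}`, which is `O(s^{θ/2})` for all
`s > 0` and `O(s)` for `s ≤ 1`. Conversely, for `s = r² ≥ 1` the ball of radius `r/2` around a
point of norm `3r/2` lies in `{r ≤ ‖x‖ ≤ 2r}`, where `‖x‖^θ p_s(x) ≥ r^θ (2πs)^{-d/2} e^{-2}`; its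
volume is a multiple of `r^d`, so `F(s) ≥ c s^{θ/2}`. Splitting `∫_{(0,∞)} F dν_S` at `1`, the
part over `(0,1]` is finite by the Lévy condition and the part over `(1,∞)` is comparable to
`∫_{(1,∞)} s^{θ/2} dν_S`.
-/

open MeasureTheory Real Set
open scoped ENNReal

lemma setLIntegral_lt_top_of_le_mul {α : Type*} [MeasurableSpace α] {μ : Measure α} {s : Set α}
    {f g : α → ℝ≥0∞} {C : ℝ≥0∞} (hC : C ≠ ∞) (hs : MeasurableSet s)
    (hfg : ∀ x ∈ s, f x ≤ C * g x) (hg : ∫⁻ x in s, g x ∂μ < ∞) :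
    ∫⁻ x in s, f x ∂μ < ∞ :=
  calc ∫⁻ x in s, f x ∂μ ≤ ∫⁻ x in s, C * g x ∂μ := setLIntegral_mono' hs hfg
    _ = C * ∫⁻ x in s, g x ∂μ := lintegral_const_mul' C g hC
    _ < ∞ := ENNReal.mul_lt_top hC.lt_top hg

lemma exists_rpow_mul_exp_neg_mul_le {α c : ℝ} (hα : 0 ≤ α) (hc : 0 < c) :
    ∃ K, 0 ≤ K ∧ ∀ u, 0 ≤ u → u ^ α * exp (-(c * u)) ≤ K := by
  set n := ⌈α⌉₊
  have hcoef : 0 ≤ (n.factorial : ℝ) / c ^ n := by positivity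
  refine ⟨1 + n.factorial / c ^ n, by positivity, fun u hu => ?_⟩
  rw [← le_div_iff₀ (exp_pos _), div_eq_mul_inv, ← exp_neg, neg_neg]
  have hexp : 1 ≤ exp (c * u) := one_le_exp (by positivity)
  rcases le_or_gt u 1 with hu1 | hu1
  · calc u ^ α ≤ 1 := rpow_le_one hu hu1 hα
      _ ≤ _ := by nlinarith
  · have hpow : (c * u) ^ n / n.factorial ≤ exp (c * u) :=
      pow_div_factorial_le_exp _ (by positivity) n
    calc u ^ α ≤ u ^ n := by
          simpa using rpow_le_rpow_of_exponent_le hu1.le (Nat.le_ceil α)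
      _ = n.factorial / c ^ n * ((c * u) ^ n / n.factorial) := by
          field_simp; ring
      _ ≤ n.factorial / c ^ n * exp (c * u) := by gcongr
      _ ≤ _ := by nlinarith

lemma rpow_eq_sq_rpow_half {r : ℝ} (hr : 0 ≤ r) (θ : ℝ) : r ^ θ = (r ^ 2) ^ (θ / 2) := by
  rw [← rpow_natCast_mul hr, Nat.cast_ofNat, mul_div_cancel₀ _ two_ne_zero]

lemma exists_rpow_mul_exp_neg_sq_div_le {θ : ℝ} (hθ : 0 ≤ θ) :
    ∃ K, 0 ≤ K ∧ ∀ r s, 0 ≤ r → 0 < s → r ^ θ * exp (-r ^ 2 / (4 * s)) ≤ K * s ^ (θ / 2) := by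
  obtain ⟨K, hK0, hK⟩ :=
    exists_rpow_mul_exp_neg_mul_le (by positivity : 0 ≤ θ / 2) (by norm_num : (0 : ℝ) < 1 / 4)
  refine ⟨K, hK0, fun r s hr hs => ?_⟩
  calc r ^ θ * exp (-r ^ 2 / (4 * s))
      = s ^ (θ / 2) * ((r ^ 2 / s) ^ (θ / 2) * exp (-(1 / 4 * (r ^ 2 / s)))) := by
        rw [rpow_eq_sq_rpow_half hr, div_rpow (by positivity) hs.le]
        field_simp
    _ ≤ K * s ^ (θ / 2) := by rw [mul_comm K]; gcongr; exact hK _ (by positivity)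

noncomputable def heatKernel (d : ℕ) (t : ℝ) (x : EuclideanSpace ℝ (Fin d)) : ℝ :=
  (2 * π * t) ^ (-(d : ℝ) / 2) * exp (-‖x‖ ^ 2 / (2 * t))

section HeatKernel

variable {d : ℕ} {t : ℝ}

lemma heatKernel_nonneg (ht : 0 ≤ t) (x : EuclideanSpace ℝ (Fin d)) : 0 ≤ heatKernel d t x := by
  unfold heatKernel; positivity

lemma lintegral_heatKernel (ht : 0 < t) :
    ∫⁻ x, ENNReal.ofReal (heatKernel d t x) = 1 := by
  have hb : 0 < (2 * t)⁻¹ := by positivity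
  have hexp : heatKernel d t
      = fun x => (2 * π * t) ^ (-(d : ℝ) / 2) * exp (-(2 * t)⁻¹ * ‖x‖ ^ 2) := by
    ext x; unfold heatKernel; congr 2; ring
  have hint : Integrable (fun x : EuclideanSpace ℝ (Fin d) => exp (-(2 * t)⁻¹ * ‖x‖ ^ 2)) := by
    simpa [Complex.norm_exp, ← Complex.ofReal_pow] using
      (GaussianFourier.integrable_cexp_neg_mul_sq_norm_add (b := ((2 * t)⁻¹ : ℝ))
        (by simpa using hb) 0 (0 : EuclideanSpace ℝ (Fin d))).norm
  have hint' : Integrable (heatKernel d t) := by rw [hexp]; exact hint.const_mul _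
  rw [← ofReal_integral_eq_lintegral_ofReal hint'
    (.of_forall fun x => heatKernel_nonneg ht.le x), hexp, integral_const_mul,
    GaussianFourier.integral_rexp_neg_mul_sq_norm hb, finrank_euclideanSpace_fin,
    ENNReal.ofReal_eq_one, div_inv_eq_mul, neg_div, rpow_neg (by positivity)]
  field_simp

lemma measurable_heatKernel : Measurable (heatKernel d t) := by
  unfold heatKernel; fun_prop

lemma heatKernel_eq_mul_heatKernel_two_mul (ht : 0 < t) (x : EuclideanSpace ℝ (Fin d)) :
    heatKernel d t x = 2 ^ ((d : ℝ) / 2) * exp (-‖x‖ ^ 2 / (4 * t)) * heatKernel d (2 * t) x := by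
  have h2 : (2 * π * (2 * t)) ^ (-(d : ℝ) / 2)
      = 2 ^ (-(d : ℝ) / 2) * (2 * π * t) ^ (-(d : ℝ) / 2) := by
    rw [← mul_rpow (by norm_num) (by positivity)]; ring_nf
  have hexp : exp (-‖x‖ ^ 2 / (2 * t))
      = exp (-‖x‖ ^ 2 / (4 * t)) * exp (-‖x‖ ^ 2 / (2 * (2 * t))) := by
    rw [← exp_add]; congr 1; field_simp; ring
  have h22 : (2 : ℝ) ^ ((d : ℝ) / 2) * 2 ^ (-(d : ℝ) / 2) = 1 := by
    rw [← rpow_add two_pos]; ring_nf; exact rpow_zero 2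
  unfold heatKernel
  rw [h2, hexp]
  linear_combination (2 * π * t) ^ (-(d : ℝ) / 2) * exp (-‖x‖ ^ 2 / (4 * t)) *
    exp (-‖x‖ ^ 2 / (2 * (2 * t))) * h22.symm

lemma setLIntegral_ofReal_le_of_le_mul_heatKernel (ht : 0 < t) {S : Set (EuclideanSpace ℝ (Fin d))}
    {f : EuclideanSpace ℝ (Fin d) → ℝ} {C : ℝ} (hf : ∀ x ∈ S, f x ≤ C * heatKernel d t x) :
    ∫⁻ x in S, ENNReal.ofReal (f x) ≤ ENNReal.ofReal C := by
  calc ∫⁻ x in S, ENNReal.ofReal (f x)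
      ≤ ∫⁻ x in S, ENNReal.ofReal C * ENNReal.ofReal (heatKernel d t x) :=
        setLIntegral_mono (measurable_heatKernel.ennreal_ofReal.const_mul _) fun x hx => by
          rw [← ENNReal.ofReal_mul' (heatKernel_nonneg ht.le x)]
          exact ENNReal.ofReal_le_ofReal (hf x hx)
    _ ≤ ∫⁻ x, ENNReal.ofReal C * ENNReal.ofReal (heatKernel d t x) := setLIntegral_le_lintegral _ _
    _ = ENNReal.ofReal C := by
        rw [lintegral_const_mul' _ _ ENNReal.ofReal_ne_top, lintegral_heatKernel ht, mul_one]

end HeatKernel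

noncomputable def gaussianTailMoment (d : ℕ) (θ s : ℝ) : ℝ≥0∞ :=
  ∫⁻ x in {x : EuclideanSpace ℝ (Fin d) | 1 ≤ ‖x‖}, ENNReal.ofReal (‖x‖ ^ θ * heatKernel d s x)

lemma gaussianTailMoment_eq (d : ℕ) (θ s : ℝ) :
    gaussianTailMoment d θ s = ∫⁻ x in {x : EuclideanSpace ℝ (Fin d) | 1 ≤ ‖x‖},
      ENNReal.ofReal (‖x‖ ^ θ * (2 * π * s) ^ (-(d : ℝ) / 2) * exp (-‖x‖ ^ 2 / (2 * s))) := by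
  simp only [gaussianTailMoment, heatKernel, mul_assoc]

section GaussianTailMoment

variable {d : ℕ} {θ : ℝ}

lemma gaussianTailMoment_le {s K : ℝ} (hs : 0 < s)
    (hK : ∀ x : EuclideanSpace ℝ (Fin d), 1 ≤ ‖x‖ → ‖x‖ ^ θ * exp (-‖x‖ ^ 2 / (4 * s)) ≤ K) :
    gaussianTailMoment d θ s ≤ ENNReal.ofReal (2 ^ ((d : ℝ) / 2) * K) := by
  refine setLIntegral_ofReal_le_of_le_mul_heatKernel (t := 2 * s) (by positivity) fun x hx => ?_
  rw [heatKernel_eq_mul_heatKernel_two_mul hs]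
  calc ‖x‖ ^ θ * (2 ^ ((d : ℝ) / 2) * exp (-‖x‖ ^ 2 / (4 * s)) * heatKernel d (2 * s) x)
      = 2 ^ ((d : ℝ) / 2) * (‖x‖ ^ θ * exp (-‖x‖ ^ 2 / (4 * s))) * heatKernel d (2 * s) x := by
        ring
    _ ≤ 2 ^ ((d : ℝ) / 2) * K * heatKernel d (2 * s) x := by
        gcongr
        · exact heatKernel_nonneg (by positivity) x
        · exact hK x hx

lemma exists_gaussianTailMoment_le_mul_rpow (hθ : 0 ≤ θ) :
    ∃ C ≠ ∞, ∀ s, 0 < s → gaussianTailMoment d θ s ≤ C * ENNReal.ofReal (s ^ (θ / 2)) := by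
  obtain ⟨K, hK0, hK⟩ := exists_rpow_mul_exp_neg_sq_div_le hθ
  refine ⟨ENNReal.ofReal (2 ^ ((d : ℝ) / 2) * K), ENNReal.ofReal_ne_top, fun s hs => ?_⟩
  rw [← ENNReal.ofReal_mul (by positivity), mul_assoc]
  exact gaussianTailMoment_le hs fun x _ => hK ‖x‖ s (norm_nonneg x) hs

lemma exists_gaussianTailMoment_le_mul (hθ : 0 ≤ θ) :
    ∃ C ≠ ∞, ∀ s ∈ Ioc 0 1, gaussianTailMoment d θ s ≤ C * ENNReal.ofReal s := by
  obtain ⟨K, hK0, hK⟩ := exists_rpow_mul_exp_neg_sq_div_le (by positivity : 0 ≤ θ + 2)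
  refine ⟨ENNReal.ofReal (2 ^ ((d : ℝ) / 2) * K), ENNReal.ofReal_ne_top, fun s ⟨hs0, hs1⟩ => ?_⟩
  rw [← ENNReal.ofReal_mul (by positivity), mul_assoc]
  refine gaussianTailMoment_le hs0 fun x hx => ?_
  calc ‖x‖ ^ θ * exp (-‖x‖ ^ 2 / (4 * s))
      ≤ ‖x‖ ^ (θ + 2) * exp (-‖x‖ ^ 2 / (4 * s)) := by
        gcongr
        linarith
    _ ≤ K * (s ^ (θ / 2) * s) := by
        rw [← rpow_add_one hs0.ne']
        convert hK ‖x‖ s (norm_nonneg x) hs0 using 3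
        ring
    _ ≤ K * s := by
        gcongr
        exact mul_le_of_le_one_left hs0.le (rpow_le_one hs0.le hs1 (by positivity))

lemma ofReal_mul_volume_ball_le_gaussianTailMoment (hd : 0 < d) (hθ : 0 ≤ θ) {r : ℝ} (hr : 1 ≤ r) :
    ENNReal.ofReal ((2 * π) ^ (-(d : ℝ) / 2) * exp (-2) * 2⁻¹ ^ d * r ^ θ) *
        volume (Metric.ball (0 : EuclideanSpace ℝ (Fin d)) 1) ≤ gaussianTailMoment d θ (r ^ 2) := by
  have : Nontrivial (EuclideanSpace ℝ (Fin d)) :=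
    Module.nontrivial_of_finrank_pos (R := ℝ) (by rwa [finrank_euclideanSpace_fin])
  have hr0 : 0 < r := one_pos.trans_le hr
  obtain ⟨z, hz⟩ := exists_norm_eq (EuclideanSpace ℝ (Fin d)) (by positivity : 0 ≤ 3 / 2 * r)
  have hball : ∀ x ∈ Metric.ball z (r / 2), r ≤ ‖x‖ ∧ ‖x‖ ≤ 2 * r := fun x hx => by
    rw [Metric.mem_ball, dist_eq_norm] at hx
    constructor <;> linarith [norm_sub_norm_le x z, norm_sub_norm_le z x, norm_sub_rev x z]
  set v := r ^ θ * (2 * π * r ^ 2) ^ (-(d : ℝ) / 2) * exp (-2) with hv_def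
  have hv : ∀ x ∈ Metric.ball z (r / 2), v ≤ ‖x‖ ^ θ * heatKernel d (r ^ 2) x := fun x hx => by
    obtain ⟨hx1, hx2⟩ := hball x hx
    rw [hv_def, heatKernel, ← mul_assoc]
    gcongr
    rw [neg_div, neg_le_neg_iff, div_le_iff₀ (by positivity)]
    nlinarith
  have hpow : (2 * π * r ^ 2) ^ (-(d : ℝ) / 2) * r ^ d = (2 * π) ^ (-(d : ℝ) / 2) := by
    rw [mul_rpow (by positivity) (by positivity), ← rpow_eq_sq_rpow_half hr0.le, mul_assoc,
      ← rpow_natCast, ← rpow_add hr0, neg_add_cancel, rpow_zero, mul_one]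
  calc ENNReal.ofReal ((2 * π) ^ (-(d : ℝ) / 2) * exp (-2) * 2⁻¹ ^ d * r ^ θ) *
        volume (Metric.ball (0 : EuclideanSpace ℝ (Fin d)) 1)
      = ENNReal.ofReal v * volume (Metric.ball z (r / 2)) := by
        rw [Measure.addHaar_ball volume z (by positivity), finrank_euclideanSpace_fin, ← mul_assoc,
          ← ENNReal.ofReal_mul (by rw [hv_def]; positivity)]
        congr 2
        rw [hv_def, div_pow, div_eq_mul_inv (r ^ d), ← inv_pow]
        linear_combination -(r ^ θ * exp (-2) * 2⁻¹ ^ d) * hpow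
    _ = ∫⁻ _ in Metric.ball z (r / 2), ENNReal.ofReal v := (setLIntegral_const _ _).symm
    _ ≤ ∫⁻ x in Metric.ball z (r / 2), ENNReal.ofReal (‖x‖ ^ θ * heatKernel d (r ^ 2) x) :=
        setLIntegral_mono' measurableSet_ball fun x hx => ENNReal.ofReal_le_ofReal (hv x hx)
    _ ≤ gaussianTailMoment d θ (r ^ 2) :=
        lintegral_mono_set fun x hx => hr.trans (hball x hx).1

lemma exists_rpow_le_mul_gaussianTailMoment (hd : 0 < d) (hθ : 0 ≤ θ) :
    ∃ C ≠ ∞, ∀ s, 1 ≤ s → ENNReal.ofReal (s ^ (θ / 2)) ≤ C * gaussianTailMoment d θ s := by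
  set a : ℝ := (2 * π) ^ (-(d : ℝ) / 2) * exp (-2) * 2⁻¹ ^ d
  set c := ENNReal.ofReal a * volume (Metric.ball (0 : EuclideanSpace ℝ (Fin d)) 1)
  have hc₀ : c ≠ 0 :=
    mul_ne_zero (by simp only [ne_eq, ENNReal.ofReal_eq_zero, not_le]; positivity)
      (Metric.measure_ball_pos volume 0 one_pos).ne'
  have hc : c ≠ ∞ := ENNReal.mul_ne_top ENNReal.ofReal_ne_top measure_ball_lt_top.ne
  refine ⟨c⁻¹, ENNReal.inv_ne_top.2 hc₀, fun s hs => ?_⟩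
  obtain ⟨r, hr, rfl⟩ : ∃ r, 1 ≤ r ∧ r ^ 2 = s :=
    ⟨√s, one_le_sqrt.2 hs, sq_sqrt (zero_le_one.trans hs)⟩
  rw [← ENNReal.mul_le_iff_le_inv hc₀ hc, ← rpow_eq_sq_rpow_half (zero_le_one.trans hr),
    mul_right_comm, ← ENNReal.ofReal_mul (by positivity)]
  exact ofReal_mul_volume_ball_le_gaussianTailMoment hd hθ hr

end GaussianTailMoment

theorem subordinate_BM_moment_equivalence_general (d : ℕ) (hd : 0 < d) (θ : ℝ) (hθ : 1 ≤ θ)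
    (νS : Measure ℝ)
    (hlevy : (∫⁻ s in Set.Ioi (0:ℝ), ENNReal.ofReal (min 1 s) ∂νS) < ⊤) :
    (∫⁻ s in Set.Ioi (0:ℝ),
        ∫⁻ x in {x : EuclideanSpace ℝ (Fin d) | 1 ≤ ‖x‖},
          ENNReal.ofReal (‖x‖ ^ θ * (2 * π * s) ^ (-(d : ℝ) / 2)
            * Real.exp (-‖x‖ ^ 2 / (2 * s))) ∂volume ∂νS) < ⊤
      ↔ (∫⁻ s in Set.Ioi (1:ℝ), ENNReal.ofReal (s ^ (θ / 2)) ∂νS) < ⊤ := by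
  have hθ₀ : 0 ≤ θ := zero_le_one.trans hθ
  obtain ⟨C₀, hC₀, h_small⟩ := exists_gaussianTailMoment_le_mul (d := d) hθ₀
  obtain ⟨C₁, hC₁, h_large⟩ := exists_gaussianTailMoment_le_mul_rpow (d := d) hθ₀
  obtain ⟨C₂, hC₂, h_lower⟩ := exists_rpow_le_mul_gaussianTailMoment hd hθ₀
  simp only [← gaussianTailMoment_eq]
  constructor
  · intro h
    exact setLIntegral_lt_top_of_le_mul hC₂ measurableSet_Ioi (fun s hs => h_lower s hs.le)
      ((lintegral_mono_set (Ioi_subset_Ioi zero_le_one)).trans_lt h)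
  · intro h
    rw [← Ioc_union_Ioi_eq_Ioi zero_le_one, lintegral_union measurableSet_Ioi Ioc_disjoint_Ioi_same]
    refine ENNReal.add_lt_top.2 ⟨?_, setLIntegral_lt_top_of_le_mul hC₁ measurableSet_Ioi
      (fun s hs => h_large s (zero_lt_one.trans hs)) h⟩
    refine setLIntegral_lt_top_of_le_mul hC₀ measurableSet_Ioc (fun s hs => ?_)
      ((lintegral_mono_set Ioc_subset_Ioi_self).trans_lt hlevy)
    rw [min_eq_right hs.2]
    exact h_small s hs

theorem subordinate_BM_moment_equivalence (d : ℕ) (hd : 0 < d) (θ : ℝ) (hθ : 1 ≤ θ)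
    (νS : Measure ℝ)
    (hνS0 : νS (Set.Iic 0) = 0)
    (hlevy : (∫⁻ s in Set.Ioi (0:ℝ), ENNReal.ofReal (min 1 s) ∂νS) < ⊤) :
    (∫⁻ s in Set.Ioi (0:ℝ),
        ∫⁻ x in {x : EuclideanSpace ℝ (Fin d) | 1 ≤ ‖x‖},
          ENNReal.ofReal (‖x‖ ^ θ * (2 * π * s) ^ (-(d : ℝ) / 2)
            * Real.exp (-‖x‖ ^ 2 / (2 * s))) ∂volume ∂νS) < ⊤
      ↔ (∫⁻ s in Set.Ioi (1:ℝ), ENNReal.ofReal (s ^ (θ / 2)) ∂νS) < ⊤ :=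
  subordinate_BM_moment_equivalence_general d hd θ hθ νS hlevy
end
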